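/- arXiv:0908.3772 — 5 statements merged into one kernel-verified Lean document; each statement's English description precedes it below -/
import Mathlib

section
/- Let R be a commutative ring and θ an m-variate iterative derivation on R. For i = 1,…,m and k ∈ ℕ define θ_i^{(k)} := θ^{(k·e_i)}, where e_i ∈ ℕ^m is the i-th standard basis vector. Then each map θ_i : R → R[[T]], r ↦ Σ_{k∈ℕ} θ_i^{(k)}(r)·T^k, is a 1-variate iterative derivation on R, and these iterative derivations pairwise commute, i.e. θ_i^{(k)} ∘ θ_j^{(l)} = θ_j^{(l)} ∘ θ_i^{(k)} for all i,j ∈ {1,…,m} and all k,l ∈ ℕ. -/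
open scoped TensorProduct

/-- `binom(i+j, i)` for multi-indices: `∏ μ, (i μ + j μ).choose (i μ)`. -/
def multiChoose {m : ℕ} (i j : Fin m →₀ ℕ) : ℕ :=
  ∏ μ : Fin m, Nat.choose (i μ + j μ) (i μ)

/-- An `m`-variate iterative derivation on a commutative ring `R`: a ring homomorphism
`θ : R → R[[T_1,…,T_m]]`, written `θ(r) = Σ_k θ^{(k)}(r)·T^k`, with `θ^{(0)} = id` and
`θ^{(i)} ∘ θ^{(j)} = binom(i+j,i)·θ^{(i+j)}` for all multi-indices `i, j`. -/
structure IterativeDerivation (m : ℕ) (R : Type*) [CommRing R] where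
  toRingHom : R →+* MvPowerSeries (Fin m) R
  coeff_zero : ∀ r : R, MvPowerSeries.coeff 0 (toRingHom r) = r
  iterate : ∀ (i j : Fin m →₀ ℕ) (r : R),
    MvPowerSeries.coeff i (toRingHom (MvPowerSeries.coeff j (toRingHom r))) =
      multiChoose i j • MvPowerSeries.coeff (i + j) (toRingHom r)

namespace IterativeDerivation

/-- The coefficient maps `θ^{(k)} : R → R` of an iterative derivation. -/
noncomputable def D {m : ℕ} {R : Type*} [CommRing R] (θ : IterativeDerivation m R)
    (k : Fin m →₀ ℕ) (r : R) : R :=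
  MvPowerSeries.coeff k (θ.toRingHom r)

end IterativeDerivation

/-!
The component `θ_i` is `θ` followed by `MvPowerSeries.killCompl`, the ring homomorphism setting
every variable other than `T_i` to zero; the iteration rule survives because the killed
coordinates contribute factors `binom(0, 0) = 1` to `multiChoose`. Commutation of the components
is the symmetry `binom(i + j, i) = binom(i + j, j)` applied to the iteration rule.
-/

section

variable {m n : ℕ}

theorem multiChoose_comm (i j : Fin m →₀ ℕ) : multiChoose i j = multiChoose j i :=
  Finset.prod_congr rfl fun μ _ => by rw [add_comm, Nat.choose_symm_add]

theorem multiChoose_embDomain (e : Fin n ↪ Fin m) (i j : Fin n →₀ ℕ) :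
    multiChoose (i.embDomain e) (j.embDomain e) = multiChoose i j := by
  rw [multiChoose, multiChoose, ← Finset.prod_subset (Finset.subset_univ (Finset.univ.map e)),
    Finset.prod_map]
  · simp only [Finsupp.embDomain_apply_self]
  · intro μ _ hμ
    have hμ : μ ∉ Set.range e := by simpa using hμ
    simp [Finsupp.embDomain_of_notMem_range _ _ _ hμ]

end

namespace IterativeDerivation

variable {m n : ℕ} {R : Type*} [CommRing R]

theorem D_comm (θ : IterativeDerivation m R) (i j : Fin m →₀ ℕ) (r : R) :
    θ.D i (θ.D j r) = θ.D j (θ.D i r) := by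
  simp only [D, θ.iterate]
  rw [multiChoose_comm, add_comm]

noncomputable def restrict (θ : IterativeDerivation m R) (e : Fin n ↪ Fin m) :
    IterativeDerivation n R where
  toRingHom := (MvPowerSeries.killCompl e).toRingHom.comp θ.toRingHom
  coeff_zero r := by
    simpa [MvPowerSeries.coeff_killCompl] using θ.coeff_zero r
  iterate i j r := by
    simp only [RingHom.comp_apply, AlgHom.toRingHom_eq_coe, RingHom.coe_coe,
      MvPowerSeries.coeff_killCompl, θ.iterate, multiChoose_embDomain, Finsupp.embDomain_add]

theorem D_restrict (θ : IterativeDerivation m R) (e : Fin n ↪ Fin m) (k : Fin n →₀ ℕ)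
    (r : R) : (θ.restrict e).D k r = θ.D (k.embDomain e) r :=
  MvPowerSeries.coeff_killCompl _ _

end IterativeDerivation

/-- For an `m`-variate iterative derivation `θ` on a commutative ring `R`, each of the
families `θ_i^{(k)} := θ^{(k·e_i)}` (`i = 1,…,m`) is a `1`-variate iterative derivation
`θ_i : R → R[[T]]`, and these iterative derivations pairwise commute:
`θ_i^{(k)} ∘ θ_j^{(l)} = θ_j^{(l)} ∘ θ_i^{(k)}` for all `i, j, k, l`. -/
theorem univariate_components_and_commute
    (m : ℕ) (R : Type) [CommRing R] (θ : IterativeDerivation m R) :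
    (∀ i : Fin m, ∃ θi : IterativeDerivation 1 R,
      ∀ (k : ℕ) (r : R), θi.D (Finsupp.single 0 k) r = θ.D (Finsupp.single i k) r) ∧
    (∀ (i j : Fin m) (k l : ℕ) (r : R),
      θ.D (Finsupp.single i k) (θ.D (Finsupp.single j l) r) =
        θ.D (Finsupp.single j l) (θ.D (Finsupp.single i k) r)) := by
  refine ⟨fun i => ?_, fun i j k l r => θ.D_comm _ _ r⟩
  let e : Fin 1 ↪ Fin m := ⟨fun _ => i, Function.injective_of_subsingleton _⟩
  refine ⟨θ.restrict e, fun k r => ?_⟩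
  rw [θ.D_restrict, Finsupp.embDomain_single]
  rfl
end

section
/- Let F be a field of characteristic p > 0 equipped with a non-degenerate m-variate iterative derivation θ, and let x_1,…,x_m ∈ F satisfy θ^{(e_i)}(x_j) = δ_{ij} for all i,j. Set F_1 := ∩_{i=1}^m ker(θ^{(e_i)}). Then the p^m monomials { x_1^{c_1}·x_2^{c_2}⋯x_m^{c_m} : 0 ≤ c_j ≤ p−1 } form a basis of F as a vector space over the subfield F_1; in particular [F : F_1] = p^m. -/
open scoped TensorProduct

/-- `θ` is non-degenerate if the `m` derivations `θ^{(e_1)},…,θ^{(e_m)}` are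
`F`-linearly independent as maps `F → F`. -/
def IterativeDerivation.Nondegenerate {m : ℕ} {F : Type*} [Field F]
    (θ : IterativeDerivation m F) : Prop :=
  LinearIndependent F (fun i : Fin m => (θ.D (Finsupp.single i 1) : F → F))

/-!
Write `x^c = ∏ⱼ xⱼ ^ cⱼ` and `B = {0, …, p - 1}ᵐ`.

Independence: differentiating an `F₁`-linear relation `∑ a_c x^c = 0` by `θ^{(eᵢ)}` gives the
relation with coefficients `(lᵢ + 1) a_{l + eᵢ}`, of smaller total degree, since the `a_c` are
constants; as `0 < cᵢ < p` is invertible in `F`, induction on the degree kills every `a_c` with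
`c ≠ 0`, and then `a_0` as well.

Spanning: let `π(z) = truncatedEval p (-x) z = ∑_{l ∈ B} θ^{(l)}(z) (-x)^l`, the
series `θ(z)` truncated to `B` and evaluated at `T = -x`. Applying `θ^{(eᵢ)}` to `π(z)`
telescopes, the only surviving boundary term carrying the factor `p = 0`, so `π(z) ∈ F₁`.
By iterativity,
`∑_{c ∈ B} π(θ^{(c)} y) x^c = ∑ₖ θ^{(k)}(y) xᵏ ∏ⱼ ∑_{a+b=kⱼ; a,b<p} binom(kⱼ, b) (-1)^b`,
and the inner sums vanish unless `kⱼ = 0`: for `kⱼ < p` this is the alternating binomial sum,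
and for `kⱼ ≥ p` every `binom(a + b, b)` with `a, b < p ≤ a + b` is divisible by `p`.
Hence `y = ∑_{c ∈ B} π(θ^{(c)} y) x^c`.
-/

open Finset
open Fintype (piFinset mem_piFinset)

@[simp]
theorem Finsupp.coe_addEquivFunOnFinite_symm {ι M : Type*} [Finite ι] [AddMonoid M]
    (f : ι → M) :
    ⇑(Finsupp.addEquivFunOnFinite.symm f) = f :=
  rfl

theorem Finsupp.addEquivFunOnFinite_symm_single {ι M : Type*} [Finite ι] [DecidableEq ι]
    [AddMonoid M] (i : ι) (a : M) :
    Finsupp.addEquivFunOnFinite.symm (Pi.single i a) = Finsupp.single i a :=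
  Finsupp.equivFunOnFinite_symm_single i a

section Combinatorics

variable {ι : Type*} [DecidableEq ι] {p : ℕ}

theorem tsub_single_one_add_single_one {i : ι} {k : ι → ℕ} (hk : k i ≠ 0) :
    k - Pi.single i 1 + Pi.single i 1 = k := by
  ext j
  rcases eq_or_ne j i with rfl | hj
  · simp; omega
  · simp [hj]

theorem sum_range_sum_range_choose_mul_neg_one_pow {R : Type*} [CommRing R] (hp : p.Prime)
    [CharP R p] (n : ℕ) :
    ∑ a ∈ range p, ∑ b ∈ range p,
        (if a + b = n then ((b + a).choose b : R) * (-1) ^ b else 0) =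
      if n = 0 then 1 else 0 := by
  by_cases hnp : n < p
  · calc _ = ∑ b ∈ range (n + 1), ∑ a ∈ range p,
            (if a + b = n then ((b + a).choose b : R) * (-1) ^ b else 0) := by
          rw [sum_comm]
          refine (sum_subset (range_subset_range.2 hnp) fun b _ hb => ?_).symm
          exact sum_eq_zero fun a _ => if_neg (by simp at hb; omega)
      _ = ((∑ b ∈ range (n + 1), (-1) ^ b * (n.choose b : ℤ) : ℤ) : R) := by
          push_cast
          refine sum_congr rfl fun b hb => ?_
          rw [mem_range] at hb
          rw [sum_eq_single_of_mem (n - b) (mem_range.2 (by omega)) fun a _ ha => if_neg (by omega),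
            if_pos (by omega), Nat.add_sub_of_le (by omega), mul_comm]
      _ = _ := by
          rw [Int.alternating_sum_range_choose]
          split_ifs <;> simp
  · rw [if_neg (by have := hp.pos; omega)]
    refine sum_eq_zero fun a ha => sum_eq_zero fun b hb => ?_
    split_ifs with hab
    · rw [mem_range] at ha hb
      rw [(CharP.cast_eq_zero_iff R p _).2 (hp.dvd_choose_add hb ha (by omega)), zero_mul]
    · rfl

variable [Fintype ι]

theorem tsub_single_one_mem_piFinset_range {i : ι} {k : ι → ℕ}
    (hk : k ∈ piFinset fun _ => range p) : k - Pi.single i 1 ∈ piFinset fun _ => range p := by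
  simp only [mem_piFinset, mem_range] at hk ⊢
  exact fun j => (Nat.sub_le _ _).trans_lt (hk j)

theorem add_single_one_mem_piFinset_range {i : ι} {l : ι → ℕ}
    (hl : l ∈ piFinset fun _ => range p) (hli : l i + 1 < p) :
    l + Pi.single i 1 ∈ piFinset fun _ => range p := by
  simp only [mem_piFinset, mem_range] at hl ⊢
  intro j
  rcases eq_or_ne j i with rfl | hj
  · simpa using hli
  · simpa [hj] using hl j

theorem sum_piFinset_range_natCast_mul_shift {R : Type*} [Semiring R] [CharP R p] (i : ι)
    (h : (ι → ℕ) → R) :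
    ∑ k ∈ piFinset fun _ => range p, (k i : R) * h k =
      ∑ l ∈ piFinset fun _ => range p, ((l i + 1 : ℕ) : R) * h (l + Pi.single i 1) := by
  rw [← sum_filter_of_ne (p := fun k => k i ≠ 0) fun k _ hk hki => by simp [hki] at hk,
    ← sum_filter_of_ne (s := piFinset fun _ => range p) (p := fun l => l i + 1 < p)
      fun l hl hne => by
        by_contra hli
        have : l i + 1 = p := by simp only [mem_piFinset, mem_range] at hl; have := hl i; omega
        simp [this] at hne]
  refine sum_nbij' (fun k => k - Pi.single i 1) (fun l => l + Pi.single i 1) ?_ ?_ ?_ ?_ ?_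
  · simp only [mem_filter]
    intro k ⟨hk, hki⟩
    refine ⟨tsub_single_one_mem_piFinset_range hk, ?_⟩
    simp only [mem_piFinset, mem_range] at hk
    have := hk i
    simp; omega
  · simp only [mem_filter]
    intro l ⟨hl, hli⟩
    exact ⟨add_single_one_mem_piFinset_range hl hli, by simp⟩
  · intro k hk
    exact tsub_single_one_add_single_one (mem_filter.1 hk).2
  · intro l _
    simp
  · intro k hk
    have hki := (mem_filter.1 hk).2
    rw [tsub_single_one_add_single_one hki, Pi.sub_apply, Pi.single_eq_same,
      Nat.sub_add_cancel (Nat.one_le_iff_ne_zero.2 hki)]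

theorem sum_piFinset_range_sum_piFinset_range {R : Type*} [CommSemiring R]
    (G : ℕ → ℕ → R) (Φ : (ι → ℕ) → R) :
    ∑ c ∈ piFinset (fun _ => range p), ∑ l ∈ piFinset (fun _ => range p),
        (∏ j, G (c j) (l j)) * Φ (c + l) =
      ∑ k ∈ piFinset (fun _ => range (p + p)),
        (∏ j, ∑ a ∈ range p, ∑ b ∈ range p, if a + b = k j then G a b else 0) * Φ k := by
  simp_rw [prod_univ_sum, Fintype.prod_ite_zero, sum_mul, ite_mul, zero_mul]
  symm
  rw [sum_comm]
  refine sum_congr rfl fun c hc => ?_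
  rw [sum_comm]
  refine sum_congr rfl fun l hl => ?_
  have hcl : c + l ∈ piFinset fun _ => range (p + p) := by
    simp only [mem_piFinset, mem_range] at hc hl ⊢
    exact fun j => Nat.add_lt_add (hc j) (hl j)
  simp_rw [← Pi.add_apply c l, ← funext_iff]
  rw [Finset.sum_ite_eq, if_pos hcl]

theorem sum_piFinset_range_eq_sum_fin {M : Type*} [AddCommMonoid M]
    (f : (ι → ℕ) → M) :
    ∑ k ∈ piFinset fun _ => range p, f k = ∑ c : ι → Fin p, f fun j => c j := by
  rw [← image_fin_univ, Fintype.piFinset_image, sum_image, Fintype.piFinset_univ]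
  intro c _ d _ hcd
  funext j
  exact Fin.ext (congrFun hcd j)

theorem forall_eq_zero_of_sum_mul_prod_pow_eq_zero {R : Type*} [CommSemiring R] {x : ι → R}
    {a : (ι → ℕ) → R}
    (hsum : ∑ k ∈ piFinset fun _ => range p, a k * ∏ j, x j ^ k j = 0)
    (ha : ∀ k ∈ piFinset fun _ => range p, k ≠ 0 → a k = 0) :
    ∀ k ∈ piFinset fun _ => range p, a k = 0 := by
  intro k hk
  by_cases hk0 : k = 0
  · subst hk0
    rw [sum_eq_single_of_mem 0 hk fun k hk hk0 => by rw [ha k hk hk0, zero_mul]] at hsum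
    simpa using hsum
  · exact ha k hk hk0

end Combinatorics

theorem Derivation.map_prod_pow_of_apply_eq_ite {R A : Type*} [CommSemiring R] [CommRing A]
    [Algebra R A] (D : Derivation R A A) {ι : Type*} [Fintype ι] [DecidableEq ι] {y : ι → A}
    {i : ι} {u : A} (hy : ∀ j, D (y j) = if i = j then u else 0) (k : ι → ℕ) :
    D (∏ j, y j ^ k j) = k i * u * ∏ j, y j ^ (k - Pi.single i 1 : ι → ℕ) j := by
  rw [← mul_prod_erase univ _ (mem_univ i), ← mul_prod_erase univ _ (mem_univ i)]
  have hrest : D (∏ j ∈ univ.erase i, y j ^ k j) = 0 :=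
    prod_induction _ (fun a => D a = 0)
      (fun a b ha hb => by rw [D.leibniz, ha, hb, smul_zero, smul_zero, add_zero])
      D.map_one_eq_zero
      (fun j hj => by
        rw [D.leibniz_pow, hy, if_neg (ne_of_mem_erase hj).symm, smul_zero, smul_zero])
  have hsame : ∏ j ∈ univ.erase i, y j ^ (k - Pi.single i 1 : ι → ℕ) j =
      ∏ j ∈ univ.erase i, y j ^ k j :=
    prod_congr rfl fun j hj => by simp [ne_of_mem_erase hj]
  rw [D.leibniz, hrest, D.leibniz_pow, hy, if_pos rfl, hsame]
  simp only [smul_eq_mul, nsmul_eq_mul, Pi.sub_apply, Pi.single_eq_same]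
  ring

namespace IterativeDerivation

variable {m p : ℕ}

section CommRing

variable {R : Type*} [CommRing R] (θ : IterativeDerivation m R)

noncomputable def DAddHom (k : Fin m →₀ ℕ) : R →+ R :=
  (MvPowerSeries.coeff k).toAddMonoidHom.comp θ.toRingHom.toAddMonoidHom

@[simp]
theorem D_zero (r : R) : θ.D 0 r = r := θ.coeff_zero r

theorem D_mul (k : Fin m →₀ ℕ) (a b : R) :
    θ.D k (a * b) = ∑ uv ∈ antidiagonal k, θ.D uv.1 a * θ.D uv.2 b := by
  classical
  simp only [D, map_mul, MvPowerSeries.coeff_mul]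

theorem D_single_mul (i : Fin m) (a b : R) :
    θ.D (Finsupp.single i 1) (a * b) =
      a * θ.D (Finsupp.single i 1) b + b * θ.D (Finsupp.single i 1) a := by
  classical
  rw [D_mul, Finsupp.antidiagonal_single, sum_map, Nat.antidiagonal_succ, sum_cons]
  simp [add_comm, mul_comm]

noncomputable def derivation (i : Fin m) : Derivation ℤ R R :=
  Derivation.mk' (θ.DAddHom (Finsupp.single i 1)).toIntLinearMap (θ.D_single_mul i)

@[simp]
theorem derivation_apply (i : Fin m) (r : R) :
    θ.derivation i r = θ.D (Finsupp.single i 1) r := rfl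

theorem D_D (k l : Fin m →₀ ℕ) (r : R) :
    θ.D k (θ.D l r) = multiChoose k l • θ.D (k + l) r :=
  θ.iterate k l r

theorem multiChoose_single_left (i : Fin m) (k : Fin m →₀ ℕ) :
    multiChoose (Finsupp.single i 1) k = k i + 1 := by
  classical
  rw [multiChoose, Fintype.prod_eq_single i fun j hj => by simp [Finsupp.single_eq_of_ne hj]]
  simp [add_comm]

theorem D_single_D (i : Fin m) (k : Fin m →₀ ℕ) (r : R) :
    θ.D (Finsupp.single i 1) (θ.D k r) = (k i + 1) • θ.D (k + Finsupp.single i 1) r := by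
  rw [D_D, multiChoose_single_left, add_comm (Finsupp.single i 1)]

theorem derivation_D_addEquivFunOnFinite_symm (i : Fin m) (l : Fin m → ℕ) (r : R) :
    θ.derivation i (θ.D (Finsupp.addEquivFunOnFinite.symm l) r) =
      ((l i + 1 : ℕ) : R) * θ.D (Finsupp.addEquivFunOnFinite.symm (l + Pi.single i 1)) r := by
  rw [derivation_apply, D_single_D, nsmul_eq_mul, map_add,
    Finsupp.addEquivFunOnFinite_symm_single, Finsupp.coe_addEquivFunOnFinite_symm]

noncomputable def truncatedEval (p : ℕ) (y : Fin m → R) (z : R) : R :=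
  ∑ l ∈ piFinset fun _ => range p,
    θ.D (Finsupp.addEquivFunOnFinite.symm l) z * ∏ j, y j ^ l j

theorem D_single_truncatedEval_neg [CharP R p] {x : Fin m → R}
    (hx : ∀ i j, θ.D (Finsupp.single i 1) (x j) = if i = j then 1 else 0) (i : Fin m) (z : R) :
    θ.D (Finsupp.single i 1) (θ.truncatedEval p (-x) z) = 0 := by
  have hneg : ∀ j, θ.derivation i ((-x) j) = if i = j then -1 else 0 := fun j => by
    rw [Pi.neg_apply, map_neg, derivation_apply, hx]
    split_ifs <;> simp
  let h : (Fin m → ℕ) → R := fun k =>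
    θ.D (Finsupp.addEquivFunOnFinite.symm k) z *
      ∏ j, (-x) j ^ (k - Pi.single i 1 : Fin m → ℕ) j
  calc θ.derivation i (θ.truncatedEval p (-x) z)
      = ∑ l ∈ piFinset fun _ => range p, ((l i + 1 : ℕ) : R) * h (l + Pi.single i 1) -
          ∑ k ∈ piFinset fun _ => range p, (k i : R) * h k := by
        rw [truncatedEval, map_sum, ← sum_sub_distrib]
        refine sum_congr rfl fun l _ => ?_
        rw [Derivation.leibniz, derivation_D_addEquivFunOnFinite_symm,
          (θ.derivation i).map_prod_pow_of_apply_eq_ite hneg]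
        simp only [h, add_tsub_cancel_right, smul_eq_mul]
        ring
    _ = 0 := by rw [sum_piFinset_range_natCast_mul_shift, sub_self]

theorem sum_truncatedEval_neg_D_mul_prod_pow (hp : p.Prime) [CharP R p] (x : Fin m → R)
    (y : R) :
    ∑ c ∈ piFinset fun _ => range p,
        θ.truncatedEval p (-x) (θ.D (Finsupp.addEquivFunOnFinite.symm c) y) * ∏ j, x j ^ c j =
      y := by
  let Φ : (Fin m → ℕ) → R := fun k =>
    θ.D (Finsupp.addEquivFunOnFinite.symm k) y * ∏ j, x j ^ k j
  calc _ = ∑ c ∈ piFinset fun _ => range p, ∑ l ∈ piFinset fun _ => range p,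
          (∏ j, (((l j + c j).choose (l j) : ℕ) : R) * (-1) ^ l j) * Φ (c + l) := by
        simp_rw [truncatedEval, sum_mul]
        refine sum_congr rfl fun c _ => sum_congr rfl fun l _ => ?_
        rw [D_D, ← map_add, add_comm l, multiChoose, nsmul_eq_mul]
        simp only [Φ, Finsupp.coe_addEquivFunOnFinite_symm, Nat.cast_prod, Pi.neg_apply,
          Pi.add_apply, pow_add]
        simp_rw [neg_pow (x _), prod_mul_distrib]
        ring
    _ = ∑ k ∈ piFinset fun _ => range (p + p),
          (∏ j, if k j = 0 then (1 : R) else 0) * Φ k := by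
        rw [sum_piFinset_range_sum_piFinset_range
          (G := fun a b => ((b + a).choose b : R) * (-1) ^ b)]
        simp_rw [sum_range_sum_range_choose_mul_neg_one_pow hp]
    _ = Φ 0 := by
        simp_rw [Fintype.prod_ite_zero, prod_const_one, ← funext_iff, ite_mul, one_mul, zero_mul]
        rw [sum_ite_eq', if_pos (by simp [hp.pos])]
        rfl
    _ = y := by simp [Φ]

theorem sum_natCast_mul_add_single_mul_prod_pow_eq_zero [CharP R p] {x : Fin m → R}
    (hx : ∀ i j, θ.D (Finsupp.single i 1) (x j) = if i = j then 1 else 0)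
    {a : (Fin m → ℕ) → R} (ha : ∀ k i, θ.D (Finsupp.single i 1) (a k) = 0)
    (hsum : ∑ k ∈ piFinset fun _ => range p, a k * ∏ j, x j ^ k j = 0) (i : Fin m) :
    ∑ l ∈ piFinset fun _ => range p,
      ((l i + 1 : ℕ) : R) * a (l + Pi.single i 1) * ∏ j, x j ^ l j = 0 := by
  let h : (Fin m → ℕ) → R := fun k => a k * ∏ j, x j ^ (k - Pi.single i 1 : Fin m → ℕ) j
  calc _ = ∑ l ∈ piFinset fun _ => range p, ((l i + 1 : ℕ) : R) * h (l + Pi.single i 1) := by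
        simp only [h, add_tsub_cancel_right, mul_assoc]
    _ = ∑ k ∈ piFinset fun _ => range p, (k i : R) * h k :=
        (sum_piFinset_range_natCast_mul_shift i h).symm
    _ = θ.derivation i (∑ k ∈ piFinset fun _ => range p, a k * ∏ j, x j ^ k j) := by
        rw [map_sum]
        refine sum_congr rfl fun k _ => ?_
        rw [Derivation.leibniz, derivation_apply θ i (a k), ha,
          (θ.derivation i).map_prod_pow_of_apply_eq_ite (hx i)]
        simp only [h, smul_eq_mul]
        ring
    _ = 0 := by rw [hsum, map_zero]

end CommRing

section Field

variable {F : Type*} [Field F] (θ : IterativeDerivation m F) {x : Fin m → F}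

theorem eq_zero_of_sum_mul_prod_pow_eq_zero_of_degree_le [CharP F p]
    (hx : ∀ i j, θ.D (Finsupp.single i 1) (x j) = if i = j then 1 else 0) (N : ℕ)
    {a : (Fin m → ℕ) → F} (ha : ∀ k i, θ.D (Finsupp.single i 1) (a k) = 0)
    (hdeg : ∀ k ∈ piFinset fun _ => range p, a k ≠ 0 → ∑ j, k j ≤ N)
    (hsum : ∑ k ∈ piFinset fun _ => range p, a k * ∏ j, x j ^ k j = 0) :
    ∀ k ∈ piFinset fun _ => range p, a k = 0 := by
  induction N generalizing a with
  | zero =>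
    refine forall_eq_zero_of_sum_mul_prod_pow_eq_zero hsum fun k hk hk0 => ?_
    by_contra hak
    exact hk0 <| funext fun j => sum_eq_zero_iff.1 (Nat.le_zero.1 (hdeg k hk hak)) j (mem_univ j)
  | succ N ih =>
    refine forall_eq_zero_of_sum_mul_prod_pow_eq_zero hsum fun k hk hk0 => ?_
    obtain ⟨i, hki⟩ : ∃ i, k i ≠ 0 := by
      by_contra! h
      exact hk0 (funext h)
    have hb := ih (a := fun l => ((l i + 1 : ℕ) : F) * a (l + Pi.single i 1))
      (fun l j => by
        rw [← derivation_apply, Derivation.leibniz, Derivation.map_natCast, derivation_apply, ha]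
        simp)
      (fun l hl hbl => by
        have hli : l i + 1 < p := by
          by_contra hli
          have : l i + 1 = p := by
            simp only [mem_piFinset, mem_range] at hl; have := hl i; omega
          simp [this] at hbl
        have := hdeg _ (add_single_one_mem_piFinset_range hl hli) (right_ne_zero_of_mul hbl)
        simpa [sum_add_distrib] using this)
      (θ.sum_natCast_mul_add_single_mul_prod_pow_eq_zero hx ha hsum i)
      (k - Pi.single i 1) (tsub_single_one_mem_piFinset_range hk)
    rw [tsub_single_one_add_single_one hki, Pi.sub_apply, Pi.single_eq_same,
      Nat.sub_add_cancel (Nat.one_le_iff_ne_zero.2 hki)] at hb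
    refine (mul_eq_zero.1 hb).resolve_left ?_
    rw [CharP.cast_eq_zero_iff F p]
    simp only [mem_piFinset, mem_range] at hk
    exact Nat.not_dvd_of_pos_of_lt (Nat.pos_of_ne_zero hki) (hk i)

theorem linearIndependent_prod_pow [CharP F p]
    (hx : ∀ i j, θ.D (Finsupp.single i 1) (x j) = if i = j then 1 else 0) (K : Subfield F)
    (hK : ∀ y ∈ K, ∀ i, θ.D (Finsupp.single i 1) y = 0) :
    LinearIndependent K (fun c : Fin m → Fin p => ∏ j, x j ^ (c j : ℕ)) := by
  rw [Fintype.linearIndependent_iff]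
  intro g hg c
  have hval : Function.Injective fun (c : Fin m → Fin p) j => (c j : ℕ) :=
    fun c d hcd => funext fun j => Fin.ext (congrFun hcd j)
  let a : (Fin m → ℕ) → F := Function.extend (fun c j => (c j : ℕ)) (fun c => (g c : F)) 0
  have ha : ∀ k i, θ.D (Finsupp.single i 1) (a k) = 0 := by
    intro k i
    simp only [a, Function.extend_def]
    split_ifs
    · exact hK _ (g _).2 i
    · rw [← derivation_apply, Pi.zero_apply, map_zero]
  have hsum : ∑ k ∈ piFinset fun _ => range p, a k * ∏ j, x j ^ k j = 0 := by
    rw [sum_piFinset_range_eq_sum_fin, ← hg]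
    simp only [a, hval.extend_apply]
    rfl
  exact Subtype.ext <| by
    simpa [a, hval.extend_apply] using
      θ.eq_zero_of_sum_mul_prod_pow_eq_zero_of_degree_le hx _ ha
        (fun k hk _ => le_sup (f := fun k : Fin m → ℕ => ∑ j, k j) hk) hsum
        (fun j => c j) (by simp)

theorem span_prod_pow_eq_top (hp : p.Prime) [CharP F p]
    (hx : ∀ i j, θ.D (Finsupp.single i 1) (x j) = if i = j then 1 else 0) (K : Subfield F)
    (hK : ∀ y, (∀ i, θ.D (Finsupp.single i 1) y = 0) → y ∈ K) :
    Submodule.span K (Set.range fun c : Fin m → Fin p => ∏ j, x j ^ (c j : ℕ)) = ⊤ := by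
  refine eq_top_iff.2 fun y _ => ?_
  rw [← θ.sum_truncatedEval_neg_D_mul_prod_pow hp x y, sum_piFinset_range_eq_sum_fin]
  refine Submodule.sum_mem _ fun c _ => ?_
  have hcoeff := hK _ fun i => θ.D_single_truncatedEval_neg hx i
    (θ.D (Finsupp.addEquivFunOnFinite.symm fun j => c j) y)
  exact Submodule.smul_mem _ (⟨_, hcoeff⟩ : K) (Submodule.subset_span (Set.mem_range_self c))

end Field

end IterativeDerivation

theorem monomials_basis_over_kernel_general
    (m p : ℕ) (hp : p.Prime) (F : Type) [Field F] [CharP F p]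
    (θ : IterativeDerivation m F)
    (x : Fin m → F)
    (hx : ∀ i j : Fin m, θ.D (Finsupp.single i 1) (x j) = if i = j then 1 else 0)
    (F₁ : Subfield F)
    (hF₁ : (F₁ : Set F) = {y : F | ∀ i : Fin m, θ.D (Finsupp.single i 1) y = 0}) :
    LinearIndependent F₁ (fun c : Fin m → Fin p => ∏ j : Fin m, x j ^ (c j : ℕ)) ∧
    Submodule.span F₁
      (Set.range fun c : Fin m → Fin p => ∏ j : Fin m, x j ^ (c j : ℕ)) = ⊤ ∧
    Module.finrank F₁ F = p ^ m := by
  have hmem (y : F) : y ∈ F₁ ↔ ∀ i, θ.D (Finsupp.single i 1) y = 0 := Set.ext_iff.1 hF₁ y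
  have hli := θ.linearIndependent_prod_pow hx F₁ fun y hy => (hmem y).1 hy
  have hspan := θ.span_prod_pow_eq_top hp hx F₁ fun y hy => (hmem y).2 hy
  refine ⟨hli, hspan, ?_⟩
  rw [Module.finrank_eq_card_basis (Module.Basis.mk hli hspan.ge), Fintype.card_fun,
    Fintype.card_fin, Fintype.card_fin]

/-- Let `F` be a field of characteristic `p > 0` with a non-degenerate `m`-variate
iterative derivation `θ`, and `x_1,…,x_m ∈ F` with `θ^{(e_i)}(x_j) = δ_{ij}`. Let
`F_1 = ∩ ker θ^{(e_i)}` (a subfield of `F`). Then the `p^m` monomials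
`x_1^{c_1}⋯x_m^{c_m}` (`0 ≤ c_j ≤ p−1`) form a basis of `F` over `F_1`;
in particular `[F : F_1] = p^m`. -/
theorem monomials_basis_over_kernel
    (m p : ℕ) (hp : p.Prime) (F : Type) [Field F] [CharP F p]
    (θ : IterativeDerivation m F) (hθ : θ.Nondegenerate)
    (x : Fin m → F)
    (hx : ∀ i j : Fin m, θ.D (Finsupp.single i 1) (x j) = if i = j then 1 else 0)
    (F₁ : Subfield F)
    (hF₁ : (F₁ : Set F) = {y : F | ∀ i : Fin m, θ.D (Finsupp.single i 1) y = 0}) :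
    LinearIndependent F₁ (fun c : Fin m → Fin p => ∏ j : Fin m, x j ^ (c j : ℕ)) ∧
    Submodule.span F₁
      (Set.range fun c : Fin m → Fin p => ∏ j : Fin m, x j ^ (c j : ℕ)) = ⊤ ∧
    Module.finrank F₁ F = p ^ m :=
  monomials_basis_over_kernel_general m p hp F θ x hx F₁ hF₁
end

section
/- Let (F,θ) be an ID-field of characteristic p > 0 with field of constants K = C_F, let (R,θ_R) be a PPV-ring over F for an IDE θ(y) = A·y, and let E = Quot(R) with the extended iterative derivation θ_E(r/s) = θ_R(r)·θ_R(s)^{−1}. Then R is exactly the set of elements of E which are differentially finite over F. -/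
/-!
An element of `R` is differentially finite because `R` is generated over `F` by the entries of
`Y`, which span a `θ`-stable space since `θ^{(k)}(Y) = A_k Y`, and by `det(Y)⁻¹`, on which `θ` acts
through a power series over `F`; and elements lying in finitely generated stable subspaces form a
subalgebra. Conversely, if `x ∈ E` is differentially finite, the `R`-module `P` spanned by its
derivatives is finitely generated and stable, so its conductor `{r ∈ R | r P ⊆ R}` is a nonzero
stable ideal, hence all of `R` by ID-simplicity, and `x ∈ P ⊆ R`.
-/

open scoped TensorProduct

/-- An ID-ring extension: the iterative derivation `θR` on `R` restricts to `θF` on `F`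
(via the algebra map). -/
def IterativeDerivation.Extends {m : ℕ} {F R : Type*} [CommRing F] [CommRing R] [Algebra F R]
    (θF : IterativeDerivation m F) (θR : IterativeDerivation m R) : Prop :=
  ∀ (k : Fin m →₀ ℕ) (f : F), θR.D k (algebraMap F R f) = algebraMap F R (θF.D k f)

/-- `R` is ID-simple: no nontrivial ideals stable under all the `θ^{(k)}`. -/
def IterativeDerivation.IDSimple {m : ℕ} {R : Type*} [CommRing R]
    (θ : IterativeDerivation m R) : Prop :=
  ∀ I : Ideal R, (∀ (k : Fin m →₀ ℕ), ∀ x ∈ I, θ.D k x ∈ I) → I = ⊥ ∨ I = ⊤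

/-- The coefficient matrices `A_k` of an iterative differential equation `θ(y) = A·y`
over `(F, θ)`: `A_0 = 1` and
`binom(k+l,l)·A_{k+l} = Σ_{i+j=l} θ^{(i)}(A_k)·A_j` for all `k, l`. -/
def IsIDE {m n : ℕ} {F : Type*} [Field F] (θ : IterativeDerivation m F)
    (A : (Fin m →₀ ℕ) → Matrix (Fin n) (Fin n) F) : Prop :=
  A 0 = 1 ∧
  ∀ k l : Fin m →₀ ℕ,
    multiChoose l k • A (k + l) =
      ∑ ij ∈ Finset.HasAntidiagonal.antidiagonal l, (A k).map (θ.D ij.1) * A ij.2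

/-- `Y ∈ GL_n(R)` is a fundamental solution matrix for the IDE `θ(y) = A·y`:
`θ^{(k)}(Y) = A_k·Y` (entrywise) for all `k`. -/
def IsFundamentalMatrix {m n : ℕ} {F R : Type*} [Field F] [CommRing R] [Algebra F R]
    (θR : IterativeDerivation m R) (A : (Fin m →₀ ℕ) → Matrix (Fin n) (Fin n) F)
    (Y : Matrix (Fin n) (Fin n) R) : Prop :=
  IsUnit Y.det ∧
  ∀ k : Fin m →₀ ℕ, Y.map (θR.D k) = (A k).map (algebraMap F R) * Y

/-- Condition (4) of a PPV-ring: the constants of `R` are exactly (the images of) the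
constants of `F`. -/
def ConstantsEq {m : ℕ} {F R : Type*} [CommRing F] [CommRing R] [Algebra F R]
    (θF : IterativeDerivation m F) (θR : IterativeDerivation m R) : Prop :=
  ∀ r : R, (∀ k : Fin m →₀ ℕ, k ≠ 0 → θR.D k r = 0) →
    ∃ f : F, (∀ k : Fin m →₀ ℕ, k ≠ 0 → θF.D k f = 0) ∧ algebraMap F R f = r

/-- `(R, θR)` is a pseudo Picard–Vessiot ring over `(F, θF)` for the IDE given by `A`:
it is ID-simple, has a fundamental solution matrix `Y` which together with `det(Y)⁻¹`
generates `R` as an `F`-algebra, and has the same constants as `F`. -/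
def IsPPVRing {m n : ℕ} {F R : Type*} [Field F] [CommRing R] [Algebra F R]
    (θF : IterativeDerivation m F) (θR : IterativeDerivation m R)
    (A : (Fin m →₀ ℕ) → Matrix (Fin n) (Fin n) F) : Prop :=
  θF.Extends θR ∧ θR.IDSimple ∧
  (∃ Y : Matrix (Fin n) (Fin n) R, IsFundamentalMatrix θR A Y ∧
    Algebra.adjoin F
      ((Set.range fun ij : Fin n × Fin n => Y ij.1 ij.2) ∪ {Ring.inverse Y.det}) = ⊤) ∧
  ConstantsEq θF θR

open Finset.HasAntidiagonal

namespace IterativeDerivation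

variable {m : ℕ}

section Leibniz

variable {S : Type*} [CommRing S] (θ : IterativeDerivation m S)

@[simp]
theorem D_zero_apply (x : S) : θ.D 0 x = x :=
  θ.coeff_zero x

theorem D_add (k : Fin m →₀ ℕ) (x y : S) : θ.D k (x + y) = θ.D k x + θ.D k y := by
  simp [D]

theorem D_mul_s5 (k : Fin m →₀ ℕ) (x y : S) :
    θ.D k (x * y) = ∑ ij ∈ antidiagonal k, θ.D ij.1 x * θ.D ij.2 y := by
  simp [D, MvPowerSeries.coeff_mul]

theorem D_D_s5 (i j : Fin m →₀ ℕ) (x : S) : θ.D i (θ.D j x) = multiChoose i j • θ.D (i + j) x :=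
  θ.iterate i j x

end Leibniz

def IsStable {E : Type*} [CommRing E] (θ : IterativeDerivation m E) (P : Set E) : Prop :=
  ∀ k : Fin m →₀ ℕ, ∀ x ∈ P, θ.D k x ∈ P

section Extension

variable {S E : Type*} [CommRing S] [CommRing E] [Algebra S E]
  {θS : IterativeDerivation m S} {θ : IterativeDerivation m E}

theorem Extends.D_smul (h : θS.Extends θ) (k : Fin m →₀ ℕ) (s : S) (x : E) :
    θ.D k (s • x) = ∑ ij ∈ antidiagonal k, θS.D ij.1 s • θ.D ij.2 x := by
  rw [Algebra.smul_def, D_mul_s5]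
  exact Finset.sum_congr rfl fun ij _ => by rw [h ij.1 s, Algebra.smul_def]

theorem Extends.isStable_one (h : θS.Extends θ) : θ.IsStable (1 : Submodule S E) := by
  intro k x hx
  obtain ⟨s, rfl⟩ := Submodule.mem_one.mp hx
  exact Submodule.mem_one.mpr ⟨θS.D k s, (h k s).symm⟩

theorem Extends.isStable_span (h : θS.Extends θ) {s : Set E}
    (hs : ∀ k : Fin m →₀ ℕ, ∀ x ∈ s, θ.D k x ∈ Submodule.span S s) :
    θ.IsStable (Submodule.span S s) := by
  intro k x hx
  induction hx using Submodule.span_induction generalizing k with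
  | mem x hx => exact hs k x hx
  | zero => simp [D]
  | add x y _ _ hx hy => exact θ.D_add k x y ▸ add_mem (hx k) (hy k)
  | smul a x _ hx =>
    rw [h.D_smul]
    exact Submodule.sum_mem _ fun ij _ => Submodule.smul_mem _ _ (hx ij.2)

theorem Extends.isStable_span_range_D (h : θS.Extends θ) (x : E) :
    θ.IsStable (Submodule.span S (Set.range fun k => θ.D k x)) := by
  refine h.isStable_span ?_
  rintro i _ ⟨j, rfl⟩
  rw [D_D_s5]
  exact Submodule.smul_of_tower_mem _ _ (Submodule.subset_span ⟨i + j, rfl⟩)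

/-- By induction on `k`: the Leibniz rule gives
`θ^{(k)}(s) • v = θ^{(k)}(s • v) - Σ_{i+j=k, j≠0} θ^{(i)}(s) • θ^{(j)}(v)` with `i < k`. -/
theorem Extends.isStable_colon (h : θS.Extends θ) {P : Set E} (hP : θ.IsStable P) :
    θS.IsStable ((1 : Submodule S E).colon P) := by
  classical
  intro k
  induction k using WellFoundedLT.induction with
  | ind k ih =>
  intro s hs
  rw [SetLike.mem_coe, Submodule.mem_colon]
  intro v hv
  have hk0 : (k, 0) ∈ antidiagonal k := mem_antidiagonal.mpr (add_zero k)
  have hleibniz := h.D_smul k s v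
  rw [← Finset.add_sum_erase _ _ hk0, D_zero_apply] at hleibniz
  rw [eq_sub_of_add_eq hleibniz.symm]
  refine sub_mem (h.isStable_one k _ (Submodule.mem_colon.mp hs v hv)) (sum_mem fun ij hij => ?_)
  obtain ⟨hne, hsum⟩ := Finset.mem_erase.mp hij
  have hj : ij.2 ≠ 0 := by
    rintro hj
    refine hne (Prod.ext ?_ hj)
    simpa [hj] using mem_antidiagonal.mp hsum
  have hlt : ij.1 < k := by
    rw [← mem_antidiagonal.mp hsum]
    exact lt_add_of_pos_right _ (pos_iff_ne_zero.mpr hj)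
  exact Submodule.mem_colon.mp (ih ij.1 hlt s hs) _ (hP ij.2 v hv)

theorem Extends.le_one_of_isStable [Nontrivial S] {M : Submonoid S} (hM : M ≤ nonZeroDivisors S)
    [IsLocalization M E] (hS : θS.IDSimple) (h : θS.Extends θ) {P : Submodule S E}
    (hP : θ.IsStable P) (hPfg : P.FG) : P ≤ 1 := by
  obtain ⟨b, hbM, hb⟩ := FractionalIdeal.isFractional_of_fg (S := M) hPfg
  have hb_mem : b ∈ (1 : Submodule S E).colon P := Submodule.mem_colon.mpr fun v hv => by
    obtain ⟨s, hs⟩ := hb v hv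
    exact Submodule.mem_one.mpr ⟨s, hs⟩
  have htop : (1 : Submodule S E).colon P = ⊤ := by
    refine (hS _ (h.isStable_colon hP)).resolve_left fun hbot => ?_
    rw [hbot, Submodule.mem_bot] at hb_mem
    exact nonZeroDivisors.ne_zero (hM hbM) hb_mem
  intro v hv
  simpa only [one_smul] using Submodule.mem_colon.mp (htop ▸ Submodule.mem_top : (1 : S) ∈ _) v hv

end Extension

section DiffFinite

variable {F S T : Type*} [CommRing F] [CommRing S] [Algebra F S] [CommRing T] [Algebra F T]
  {θ : IterativeDerivation m S}

variable (F) in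
def IsDiffFinite (θ : IterativeDerivation m S) (x : S) : Prop :=
  ∃ V : Submodule F S, V.FG ∧ θ.IsStable V ∧ x ∈ V

theorem IsStable.sup {V W : Submodule F S} (hV : θ.IsStable V) (hW : θ.IsStable W) :
    θ.IsStable ↑(V ⊔ W) := by
  intro k x hx
  obtain ⟨v, hv, w, hw, rfl⟩ := Submodule.mem_sup.mp hx
  rw [D_add]
  exact add_mem (Submodule.mem_sup_left (hV k v hv)) (Submodule.mem_sup_right (hW k w hw))

theorem IsStable.mul {V W : Submodule F S} (hV : θ.IsStable V) (hW : θ.IsStable W) :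
    θ.IsStable ↑(V * W) := by
  intro k x hx
  refine Submodule.mul_induction_on hx (fun v hv w hw => ?_) (fun x y hx hy => ?_)
  · rw [D_mul_s5]
    exact sum_mem fun ij _ => Submodule.mul_mem_mul (hV ij.1 v hv) (hW ij.2 w hw)
  · exact θ.D_add k x y ▸ add_mem hx hy

theorem Extends.isDiffFinite_of_mem_adjoin {θF : IterativeDerivation m F} (h : θF.Extends θ)
    {s : Set S} (hs : ∀ x ∈ s, θ.IsDiffFinite F x) {x : S} (hx : x ∈ Algebra.adjoin F s) :
    θ.IsDiffFinite F x := by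
  induction hx using Algebra.adjoin_induction with
  | mem x hx => exact hs x hx
  | algebraMap f =>
    exact ⟨1, Submodule.one_eq_span (R := F) (A := S) ▸ Submodule.fg_span_singleton 1,
      h.isStable_one, Submodule.algebraMap_mem f⟩
  | add x y _ _ hx hy =>
    obtain ⟨V, hVfg, hV, hxV⟩ := hx
    obtain ⟨W, hWfg, hW, hyW⟩ := hy
    exact ⟨V ⊔ W, hVfg.sup hWfg, hV.sup hW,
      add_mem (Submodule.mem_sup_left hxV) (Submodule.mem_sup_right hyW)⟩
  | mul x y _ _ hx hy =>
    obtain ⟨V, hVfg, hV, hxV⟩ := hx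
    obtain ⟨W, hWfg, hW, hyW⟩ := hy
    exact ⟨V * W, hVfg.mul hWfg, hV.mul hW, Submodule.mul_mem_mul hxV hyW⟩

theorem IsDiffFinite.map {θT : IterativeDerivation m T} (f : S →ₐ[F] T)
    (hf : ∀ k x, θT.D k (f x) = f (θ.D k x)) {x : S} (hx : θ.IsDiffFinite F x) :
    θT.IsDiffFinite F (f x) := by
  obtain ⟨V, hVfg, hV, hxV⟩ := hx
  refine ⟨V.map f.toLinearMap, hVfg.map _, ?_, Submodule.mem_map_of_mem hxV⟩
  rintro k _ ⟨v, hv, rfl⟩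
  exact hf k v ▸ Submodule.mem_map_of_mem (hV k v hv)

theorem IsDiffFinite.finite_span_range_D [IsNoetherianRing F] {x : S} (hx : θ.IsDiffFinite F x) :
    Module.Finite F (Submodule.span F (Set.range fun k => θ.D k x)) := by
  obtain ⟨V, hVfg, hV, hxV⟩ := hx
  have hle : Submodule.span F (Set.range fun k => θ.D k x) ≤ V :=
    Submodule.span_le.mpr (Set.range_subset_iff.mpr fun k => hV k x hxV)
  exact Module.Finite.iff_fg.mpr (hVfg.of_le hle)

theorem Extends.isDiffFinite_of_toRingHom_eq {θF : IterativeDerivation m F} (h : θF.Extends θ)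
    {x : S} {c : MvPowerSeries (Fin m) F}
    (hc : θ.toRingHom x = MvPowerSeries.map (algebraMap F S) c * MvPowerSeries.C x) :
    θ.IsDiffFinite F x := by
  refine ⟨Submodule.span F {x}, Submodule.fg_span_singleton x, h.isStable_span ?_,
    Submodule.mem_span_singleton_self x⟩
  intro k y hy
  rw [Set.mem_singleton_iff.mp hy]
  have hD : θ.D k x = MvPowerSeries.coeff k c • x := by
    rw [D, hc, MvPowerSeries.coeff_mul_C, MvPowerSeries.coeff_map, Algebra.smul_def]
  exact hD ▸ Submodule.smul_mem _ _ (Submodule.mem_span_singleton_self x)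

end DiffFinite

section PowerSeries

variable {F S : Type*} [Field F] [CommRing S] [Algebra F S] {θ : IterativeDerivation m S}

theorem toRingHom_inverse [Nontrivial S] {x : S} (hx : IsUnit x) {c : MvPowerSeries (Fin m) F}
    (hc : θ.toRingHom x = MvPowerSeries.map (algebraMap F S) c * MvPowerSeries.C x) :
    θ.toRingHom (Ring.inverse x) =
      MvPowerSeries.map (algebraMap F S) c⁻¹ * MvPowerSeries.C (Ring.inverse x) := by
  set φ := MvPowerSeries.map (σ := Fin m) (algebraMap F S)
  set u := Ring.inverse x
  have hxu : x * u = 1 := Ring.mul_inverse_cancel x hx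
  have hc0 : MvPowerSeries.constantCoeff c ≠ 0 := by
    intro h0
    have hcoeff := congrArg (MvPowerSeries.coeff 0) hc
    rw [θ.coeff_zero, MvPowerSeries.coeff_mul_C, MvPowerSeries.coeff_map,
      MvPowerSeries.coeff_zero_eq_constantCoeff_apply, h0, map_zero, zero_mul] at hcoeff
    exact hx.ne_zero hcoeff
  have hinv : θ.toRingHom x * (φ c⁻¹ * MvPowerSeries.C u) = 1 := by
    calc θ.toRingHom x * (φ c⁻¹ * MvPowerSeries.C u)
        = φ (c * c⁻¹) * MvPowerSeries.C (x * u) := by rw [hc, map_mul, map_mul]; ring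
      _ = 1 := by rw [MvPowerSeries.mul_inv_cancel c hc0, hxu, map_one, map_one, one_mul]
  calc θ.toRingHom u = θ.toRingHom u * (θ.toRingHom x * (φ c⁻¹ * MvPowerSeries.C u)) := by
        rw [hinv, mul_one]
    _ = φ c⁻¹ * MvPowerSeries.C u := by
        rw [← mul_assoc, ← map_mul, mul_comm u x, hxu, map_one, one_mul]

end PowerSeries

end IterativeDerivation

open IterativeDerivation

section FundamentalMatrix

variable {m n : ℕ} {F S : Type*} [Field F] [CommRing S] [Algebra F S]
  {θF : IterativeDerivation m F} {θ : IterativeDerivation m S}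
  {A : (Fin m →₀ ℕ) → Matrix (Fin n) (Fin n) F} {Y : Matrix (Fin n) (Fin n) S}

theorem IsFundamentalMatrix.D_apply (hY : IsFundamentalMatrix θ A Y) (k : Fin m →₀ ℕ)
    (i j : Fin n) : θ.D k (Y i j) = ∑ l, A k i l • Y l j := by
  simpa [Matrix.mul_apply, Algebra.smul_def] using congrFun (congrFun (hY.2 k) i) j

theorem IsFundamentalMatrix.isDiffFinite_apply (h : θF.Extends θ)
    (hY : IsFundamentalMatrix θ A Y) (i j : Fin n) : θ.IsDiffFinite F (Y i j) := by
  refine ⟨Submodule.span F (Set.range fun ij : Fin n × Fin n => Y ij.1 ij.2),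
    Submodule.fg_span (Set.finite_range _), h.isStable_span ?_,
    Submodule.subset_span ⟨(i, j), rfl⟩⟩
  rintro k _ ⟨⟨i, j⟩, rfl⟩
  rw [hY.D_apply]
  exact sum_mem fun l _ => Submodule.smul_mem _ _ (Submodule.subset_span ⟨(l, j), rfl⟩)

/-- `θ(Y) = B(T) · Y` with `B(T) = Σ A_k T^k ∈ M_n(F[[T]])`, so `θ(det Y) = det B(T) · det Y`. -/
theorem IsFundamentalMatrix.exists_toRingHom_det (hY : IsFundamentalMatrix θ A Y) :
    ∃ c : MvPowerSeries (Fin m) F,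
      θ.toRingHom Y.det = MvPowerSeries.map (algebraMap F S) c * MvPowerSeries.C Y.det := by
  let B : Matrix (Fin n) (Fin n) (MvPowerSeries (Fin m) F) := Matrix.of fun i j k => A k i j
  have hθY : θ.toRingHom.mapMatrix Y =
      (MvPowerSeries.map (algebraMap F S)).mapMatrix B * MvPowerSeries.C.mapMatrix Y := by
    ext i j k
    rw [RingHom.mapMatrix_apply, Matrix.map_apply, ← D, hY.D_apply, Matrix.mul_apply, map_sum]
    refine Finset.sum_congr rfl fun l _ => ?_
    rw [RingHom.mapMatrix_apply, RingHom.mapMatrix_apply, Matrix.map_apply, Matrix.map_apply,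
      MvPowerSeries.coeff_mul_C, MvPowerSeries.coeff_map, Algebra.smul_def]
    rfl
  refine ⟨B.det, ?_⟩
  rw [RingHom.map_det, hθY, Matrix.det_mul, ← RingHom.map_det, ← RingHom.map_det]

theorem IsFundamentalMatrix.isDiffFinite_of_adjoin_eq_top [Nontrivial S] (h : θF.Extends θ)
    (hY : IsFundamentalMatrix θ A Y)
    (hgen : Algebra.adjoin F
      ((Set.range fun ij : Fin n × Fin n => Y ij.1 ij.2) ∪ {Ring.inverse Y.det}) = ⊤)
    (x : S) : θ.IsDiffFinite F x := by
  refine h.isDiffFinite_of_mem_adjoin ?_ (hgen ▸ Algebra.mem_top)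
  rintro _ (⟨⟨i, j⟩, rfl⟩ | rfl)
  · exact hY.isDiffFinite_apply h i j
  · obtain ⟨c, hc⟩ := hY.exists_toRingHom_det
    exact h.isDiffFinite_of_toRingHom_eq (toRingHom_inverse hY.1 hc)

end FundamentalMatrix

theorem ppvRing_eq_diffFinite_general
    (m n : ℕ)
    (F R E : Type) [Field F] [CommRing R] [IsDomain R] [Algebra F R]
    [Field E] [Algebra R E] [IsFractionRing R E] [Algebra F E] [IsScalarTower F R E]
    (θF : IterativeDerivation m F) (θR : IterativeDerivation m R)
    (θE : IterativeDerivation m E)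
    (A : (Fin m →₀ ℕ) → Matrix (Fin n) (Fin n) F)
    (hPPV : IsPPVRing θF θR A)
    (hRE : ∀ (k : Fin m →₀ ℕ) (r : R), θE.D k (algebraMap R E r) = algebraMap R E (θR.D k r)) :
    Set.range (algebraMap R E) =
      {x : E | Module.Finite F
        (Submodule.span F (Set.range fun k : Fin m →₀ ℕ => θE.D k x))} := by
  obtain ⟨hFR, hsimple, ⟨Y, hY, hgen⟩, -⟩ := hPPV
  have hRE : θR.Extends θE := hRE
  ext x
  constructor
  · rintro ⟨r, rfl⟩
    exact ((hY.isDiffFinite_of_adjoin_eq_top hFR hgen r).map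
      (IsScalarTower.toAlgHom F R E) hRE).finite_span_range_D
  · intro hx
    obtain ⟨t, ht⟩ := Module.Finite.iff_fg.mp hx
    have hfg : (Submodule.span R (Set.range fun k => θE.D k x)).FG :=
      ⟨t, by rw [← Submodule.span_span_of_tower F R, ht, Submodule.span_span_of_tower]⟩
    exact Submodule.mem_one.mp <| hRE.le_one_of_isStable le_rfl hsimple
      (hRE.isStable_span_range_D x) hfg (Submodule.subset_span ⟨0, θE.D_zero_apply x⟩)

/-- Let `(R, θR)` be a PPV-ring over the ID-field `(F, θ)` of characteristic `p > 0`,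
and `E = Quot(R)` with the extended iterative derivation. Then `R` is exactly the set of
elements of `E` which are differentially finite over `F`, i.e. whose derivatives span a
finite-dimensional `F`-subspace of `E`. -/
theorem ppvRing_eq_diffFinite
    (m n p : ℕ) (hp : p.Prime)
    (F R E : Type) [Field F] [CharP F p] [CommRing R] [IsDomain R] [Algebra F R]
    [Field E] [Algebra R E] [IsFractionRing R E] [Algebra F E] [IsScalarTower F R E]
    (θF : IterativeDerivation m F) (θR : IterativeDerivation m R)
    (θE : IterativeDerivation m E)
    (A : (Fin m →₀ ℕ) → Matrix (Fin n) (Fin n) F) (hA : IsIDE θF A)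
    (hPPV : IsPPVRing θF θR A)
    (hRE : ∀ (k : Fin m →₀ ℕ) (r : R), θE.D k (algebraMap R E r) = algebraMap R E (θR.D k r)) :
    Set.range (algebraMap R E) =
      {x : E | Module.Finite F
        (Submodule.span F (Set.range fun k : Fin m →₀ ℕ => θE.D k x))} :=
  ppvRing_eq_diffFinite_general m n F R E θF θR θE A hPPV hRE
end

section
/- Let p be a prime, F ⊆ E a field extension in characteristic p, and h ∈ ℕ. Suppose that for all r, s ∈ E the element (r⊗s − s⊗r)^{p^h} equals 0 in E ⊗_F E. Then x^{p^h} ∈ F for every x ∈ E, i.e. E/F is purely inseparable of exponent ≤ h. -/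
open scoped TensorProduct

/-!
Since `E ⊗_F E` has characteristic `p`, the Frobenius power turns the hypothesis for `r = x`,
`s = 1` into `x^{p^h} ⊗ 1 = 1 ⊗ x^{p^h}`. An element `y` with `y ⊗ 1 = 1 ⊗ y` lies in `F`:
applying `id ⊗ φ` for a functional `φ` with `φ 1 = 1` gives `y = φ y • 1`.
-/

namespace TensorProduct

theorem mem_span_singleton_of_tmul_eq_tmul {K V : Type*} [Semifield K] [AddCommMonoid V]
    [Module K V] [Module.Projective K V] {v w : V} (hw : w ≠ 0)
    (h : v ⊗ₜ[K] w = w ⊗ₜ[K] v) : v ∈ K ∙ w := by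
  obtain ⟨φ, hφ⟩ := Module.Projective.exists_dual_eq_one K hw
  have := congrArg ((TensorProduct.rid K V).toLinearMap ∘ₗ LinearMap.lTensor V φ) h
  simp only [LinearMap.comp_apply, LinearMap.lTensor_tmul, LinearEquiv.coe_coe, rid_tmul, hφ,
    one_smul] at this
  exact Submodule.mem_span_singleton.mpr ⟨φ v, this.symm⟩

end TensorProduct

theorem Algebra.mem_range_algebraMap_of_tmul_one_eq_one_tmul {F E : Type*} [Field F] [Ring E]
    [Nontrivial E] [Algebra F E] {y : E} (h : y ⊗ₜ[F] (1 : E) = 1 ⊗ₜ[F] y) :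
    y ∈ (algebraMap F E).range := by
  obtain ⟨a, rfl⟩ :=
    Submodule.mem_span_singleton.mp (TensorProduct.mem_span_singleton_of_tmul_eq_tmul one_ne_zero h)
  exact ⟨a, Algebra.algebraMap_eq_smul_one a⟩

/-- Let `E/F` be a field extension in characteristic `p` and `h ∈ ℕ` such that
`(r ⊗ s − s ⊗ r)^{p^h} = 0` in `E ⊗_F E` for all `r, s ∈ E`. Then `x^{p^h} ∈ F` for
every `x ∈ E`, i.e. `E/F` is purely inseparable of exponent `≤ h`. -/
theorem purelyInseparable_of_tensor_pow_eq_zero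
    (p h : ℕ) (hp : p.Prime) (F E : Type) [Field F] [Field E] [Algebra F E]
    [CharP F p]
    (hT : ∀ r s : E, (r ⊗ₜ[F] s - s ⊗ₜ[F] r) ^ p ^ h = (0 : E ⊗[F] E)) :
    ∀ x : E, x ^ p ^ h ∈ (algebraMap F E).range := by
  intro x
  have : Fact p.Prime := ⟨hp⟩
  have : CharP (E ⊗[F] E) p := charP_of_injective_algebraMap (algebraMap F _).injective p
  apply Algebra.mem_range_algebraMap_of_tmul_one_eq_one_tmul
  have hx := hT x 1
  rwa [sub_pow_char_pow, Algebra.TensorProduct.tmul_pow, Algebra.TensorProduct.tmul_pow, one_pow,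
    sub_eq_zero] at hx
end

section
/- Let F be a field of characteristic p > 0 with an m-variate iterative derivation θ, and for ℓ ∈ ℕ set J_ℓ := { j ∈ ℕ^m \ {0} : j_i < p^ℓ for all i } and F_ℓ := ∩_{j∈J_ℓ} ker(θ^{(j)}). If F_1 = F^p (the subfield of p-th powers), then F_ℓ = F^{p^ℓ} for all ℓ ∈ ℕ. -/
/-!
Frobenius on power series: `θ(z ^ p ^ ℓ) = θ(z) ^ p ^ ℓ` only has monomials whose exponents are
divisible by `p ^ ℓ`, so `F^{p^ℓ} ⊆ F_ℓ`. Conversely, by induction on `ℓ`: if `y ∈ F_{ℓ+1} ⊆ F_1`,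
then `y = z ^ p`, and `θ^{(j)}(z) ^ p = θ^{(p j)}(y) = 0` for `j ∈ J_ℓ`, so `z ∈ F_ℓ = F^{p^ℓ}`.
-/

open scoped TensorProduct

/-- The index set `J_ℓ = { j ∈ ℕ^m \ {0} : j_i < p^ℓ for all i }`. -/
def Jset (m p ℓ : ℕ) : Set (Fin m →₀ ℕ) :=
  {j : Fin m →₀ ℕ | j ≠ 0 ∧ ∀ i : Fin m, j i < p ^ ℓ}

namespace MvPowerSeries

variable {σ R : Type*} [CommRing R] (p : ℕ) [ExpChar R p]

theorem coeff_nsmul_pow_char (f : MvPowerSeries σ R) (k : σ →₀ ℕ) :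
    coeff (p • k) (f ^ p) = coeff k f ^ p := by
  rw [← map_frobenius_expand p (expChar_ne_zero R p), coeff_map, coeff_expand_smul,
    frobenius_def]

theorem coeff_pow_char_pow_of_not_dvd (f : MvPowerSeries σ R) {n : ℕ} {d : σ →₀ ℕ} {i : σ}
    (h : ¬ p ^ n ∣ d i) : coeff d (f ^ p ^ n) = 0 := by
  rw [← map_iterateFrobenius_expand p (expChar_ne_zero R p), coeff_map,
    coeff_expand_of_not_dvd _ _ _ h, map_zero]

end MvPowerSeries

namespace Jset

variable {m p : ℕ}

theorem exists_not_dvd {ℓ : ℕ} {j : Fin m →₀ ℕ} (hj : j ∈ Jset m p ℓ) :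
    ∃ i, ¬ p ^ ℓ ∣ j i := by
  obtain ⟨hj0, hlt⟩ := hj
  obtain ⟨i, hi⟩ := Finsupp.ne_iff.mp hj0
  exact ⟨i, Nat.not_dvd_of_pos_of_lt (Nat.pos_of_ne_zero hi) (hlt i)⟩

theorem subset_of_le (hp : 0 < p) {ℓ ℓ' : ℕ} (h : ℓ ≤ ℓ') : Jset m p ℓ ⊆ Jset m p ℓ' :=
  fun _ ⟨hj0, hlt⟩ => ⟨hj0, fun i => (hlt i).trans_le (Nat.pow_le_pow_right hp h)⟩

theorem nsmul_mem_succ (hp : 0 < p) {ℓ : ℕ} {j : Fin m →₀ ℕ} (hj : j ∈ Jset m p ℓ) :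
    p • j ∈ Jset m p (ℓ + 1) := by
  obtain ⟨hj0, hlt⟩ := hj
  refine ⟨(smul_ne_zero_iff_right hp.ne').mpr hj0, fun i => ?_⟩
  rw [Finsupp.smul_apply, smul_eq_mul, pow_succ']
  exact Nat.mul_lt_mul_of_pos_left (hlt i) hp

end Jset

namespace IterativeDerivation

variable {m p : ℕ} {R : Type*} [CommRing R] [ExpChar R p] (θ : IterativeDerivation m R)

theorem D_nsmul_pow_char (j : Fin m →₀ ℕ) (z : R) : θ.D (p • j) (z ^ p) = θ.D j z ^ p := by
  rw [D, map_pow, MvPowerSeries.coeff_nsmul_pow_char, D]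

theorem D_pow_char_pow_eq_zero {ℓ : ℕ} (z : R) {j : Fin m →₀ ℕ} (hj : j ∈ Jset m p ℓ) :
    θ.D j (z ^ p ^ ℓ) = 0 := by
  obtain ⟨i, hi⟩ := Jset.exists_not_dvd hj
  rw [D, map_pow, MvPowerSeries.coeff_pow_char_pow_of_not_dvd p _ hi]

theorem D_eq_zero_of_D_pow_char_eq_zero [IsReduced R] {ℓ : ℕ} {z : R}
    (h : ∀ j ∈ Jset m p (ℓ + 1), θ.D j (z ^ p) = 0) {j : Fin m →₀ ℕ} (hj : j ∈ Jset m p ℓ) :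
    θ.D j z = 0 := by
  have hp : 0 < p := Nat.pos_of_ne_zero (expChar_ne_zero R p)
  apply IsReduced.eq_zero _ ⟨p, ?_⟩
  rw [← θ.D_nsmul_pow_char, h _ (Jset.nsmul_mem_succ hp hj)]

end IterativeDerivation

/-- Let `F` be a field of characteristic `p > 0` with an `m`-variate iterative
derivation `θ`, and `F_ℓ := ∩_{j ∈ J_ℓ} ker θ^{(j)}`. If `F_1 = F^p`, then
`F_ℓ = F^{p^ℓ}` for all `ℓ`. -/
theorem kernel_field_eq_pow_of_first
    (m p : ℕ) (hp : p.Prime) (F : Type) [Field F] [CharP F p]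
    (θ : IterativeDerivation m F)
    (h1 : {y : F | ∀ j ∈ Jset m p 1, θ.D j y = 0} = Set.range fun z : F => z ^ p) :
    ∀ ℓ : ℕ, {y : F | ∀ j ∈ Jset m p ℓ, θ.D j y = 0} =
      Set.range fun z : F => z ^ p ^ ℓ := by
  have := ExpChar.prime (R := F) hp
  intro ℓ
  refine Set.Subset.antisymm ?_ (Set.range_subset_iff.mpr fun z _ => θ.D_pow_char_pow_eq_zero z)
  induction ℓ with
  | zero => exact fun y _ => ⟨y, by simp⟩
  | succ ℓ ih =>
    intro y hy
    obtain ⟨z, rfl⟩ : y ∈ Set.range fun z : F => z ^ p :=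
      h1 ▸ fun j hj => hy j (Jset.subset_of_le hp.pos (by omega) hj)
    obtain ⟨w, rfl⟩ := ih fun j hj => θ.D_eq_zero_of_D_pow_char_eq_zero hy hj
    exact ⟨w, by simp only [pow_succ, pow_mul]⟩
end
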